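/- arXiv:1503.00584 — 5 statements merged into one kernel-verified Lean document; each statement's English description precedes it below -/
import Mathlib

section
/- Let P be a walk i = i_1, i_2, ..., i_r = j in a graph G, and for each interior vertex k of P choose t_k ∈ {x_k, y_k} arbitrarily. If P has odd length, then (x_i x_j - y_i y_j) · ∏_{k ∈ int(P)} t_k belongs to the parity binomial edge ideal I(G). If P has even length, then (x_i y_j - y_i x_j) · ∏_{k ∈ int(P)} t_k belongs to I(G). -/
open MvPolynomial

noncomputable section

/-- The parity binomial edge ideal of a graph `G`, in `k[x_i, y_i : i ∈ V]`
realized as `MvPolynomial (V ⊕ V) k` with `x i = X (Sum.inl i)`, `y i = X (Sum.inr i)`. -/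
def pbei (k : Type*) [Field k] {V : Type*} (G : SimpleGraph V) :
    Ideal (MvPolynomial (V ⊕ V) k) :=
  Ideal.span {f | ∃ i j, G.Adj i j ∧
    f = X (Sum.inl i) * X (Sum.inl j) - X (Sum.inr i) * X (Sum.inr j)}

/-- The interior of a walk: its support minus the two endpoints. -/
def walkInterior {V : Type*} [DecidableEq V] {G : SimpleGraph V} {i j : V}
    (w : G.Walk i j) : Finset V :=
  w.support.toFinset \ {i, j}

namespace PbeiProof

variable {k : Type*} [Field k] {V : Type*} [DecidableEq V]

/-- The "odd walk" binomial `x_i x_j - y_i y_j`. -/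
def godd (k : Type*) [Field k] {V : Type*} (i j : V) : MvPolynomial (V ⊕ V) k :=
  X (Sum.inl i) * X (Sum.inl j) - X (Sum.inr i) * X (Sum.inr j)

/-- The "even walk" binomial `x_i y_j - y_i x_j`. -/
def geven (k : Type*) [Field k] {V : Type*} (i j : V) : MvPolynomial (V ⊕ V) k :=
  X (Sum.inl i) * X (Sum.inr j) - X (Sum.inr i) * X (Sum.inl j)

lemma gen_mem (G : SimpleGraph V) {i j : V} (h : G.Adj i j) : godd k i j ∈ pbei k G :=
  Ideal.subset_span ⟨i, j, h, rfl⟩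

/-- `p` "covers" the finite set `S` of vertices: `p` is a product of one variable
(`x_v` or `y_v`) for each `v ∈ S`, times anything. -/
def Cov (S : Finset V) (p : MvPolynomial (V ⊕ V) k) : Prop :=
  ∃ (t : V → MvPolynomial (V ⊕ V) k) (q : MvPolynomial (V ⊕ V) k),
    (∀ v : V, t v = X (Sum.inl v) ∨ t v = X (Sum.inr v)) ∧
    p = (∏ v ∈ S, t v) * q

lemma cov_mono {S T : Finset V} (hST : S ⊆ T) {p : MvPolynomial (V ⊕ V) k}
    (hc : Cov T p) : Cov S p := by
  obtain ⟨t, q, ht, rfl⟩ := hc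
  exact ⟨t, (∏ v ∈ T \ S, t v) * q, ht, by
    rw [← mul_assoc, mul_comm (∏ v ∈ S, t v), Finset.prod_sdiff hST]⟩

lemma cov_extract {S : Finset V} {v : V} (hv : v ∈ S) {p : MvPolynomial (V ⊕ V) k}
    (hc : Cov S p) :
    ∃ (u p' : MvPolynomial (V ⊕ V) k),
      (u = X (Sum.inl v) ∨ u = X (Sum.inr v)) ∧ p = u * p' ∧ Cov (S.erase v) p' := by
  obtain ⟨t, q, ht, rfl⟩ := hc
  exact ⟨t v, (∏ x ∈ S.erase v, t x) * q, ht v,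
    by rw [← mul_assoc, Finset.mul_prod_erase _ _ hv], t, q, ht, rfl⟩

lemma cov_insert {S : Finset V} {v : V} (hv : v ∉ S) {p : MvPolynomial (V ⊕ V) k}
    (hc : Cov S p) {u : MvPolynomial (V ⊕ V) k}
    (hu : u = X (Sum.inl v) ∨ u = X (Sum.inr v)) : Cov (insert v S) (u * p) := by
  obtain ⟨t, q, ht, rfl⟩ := hc
  refine ⟨Function.update t v u, q, ?_, ?_⟩
  · intro w
    rcases eq_or_ne w v with rfl | hne
    · simpa using hu
    · simpa [Function.update_of_ne hne] using ht w
  · have hpr : ∏ x ∈ S, Function.update t v u x = ∏ x ∈ S, t x :=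
      Finset.prod_congr rfl fun x hx => Function.update_of_ne (by rintro rfl; exact hv hx) _ _
    rw [Finset.prod_insert hv, Function.update_self, hpr, mul_assoc]

lemma walkInterior_cons {G : SimpleGraph V} {i b j : V} (h : G.Adj i b) (w : G.Walk b j) :
    walkInterior (SimpleGraph.Walk.cons h w) = w.support.toFinset \ {i, j} := by
  simp only [walkInterior, SimpleGraph.Walk.support_cons, List.toFinset_cons]
  exact Finset.insert_sdiff_of_mem _ (by simp)

lemma main (G : SimpleGraph V) :
    ∀ n : ℕ, ∀ (i j : V) (w : G.Walk i j), w.length = n →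
      ∀ p : MvPolynomial (V ⊕ V) k, Cov (walkInterior w) p →
      (Odd n → godd k i j * p ∈ pbei k G) ∧ (Even n → geven k i j * p ∈ pbei k G) := by
  intro n
  induction n using Nat.strong_induction_on with
  | _ n IH =>
  intro i j w hw p hp
  cases w with
  | nil =>
    simp only [SimpleGraph.Walk.length_nil] at hw
    subst hw
    constructor
    · intro hodd; simp at hodd
    · intro _
      have hz : geven k i i * p = 0 := by
        simp only [geven]; ring
      rw [hz]; exact Ideal.zero_mem _
  | @cons _ b _ h w' =>
    simp only [SimpleGraph.Walk.length_cons] at hw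
    subst hw
    rw [walkInterior_cons h w'] at hp
    by_cases hbj : b = j
    · subst hbj
      constructor
      · intro _
        exact Ideal.mul_mem_right _ _ (gen_mem G h)
      · intro heven
        have hodd' : Odd w'.length := by
          obtain ⟨c, hc⟩ := heven; exact ⟨c - 1, by omega⟩
        cases w' with
        | nil => simp at hodd'
        | @cons _ v₁ _ h₂ d =>
          simp only [SimpleGraph.Walk.length_cons] at hodd' heven ⊢
          have hd : Even d.length := by
            obtain ⟨c, hc⟩ := hodd'; exact ⟨c, by omega⟩
          have hsupp : (SimpleGraph.Walk.cons h₂ d).support.toFinset \ ({i, b} : Finset V)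
              = d.support.toFinset \ ({i, b} : Finset V) := by
            simp only [SimpleGraph.Walk.support_cons, List.toFinset_cons]
            exact Finset.insert_sdiff_of_mem _ (by simp)
          rw [hsupp] at hp
          by_cases hv₁ : v₁ = i
          · subst hv₁
            have hres := (IH d.length (by simp only [SimpleGraph.Walk.length_cons]; omega) _ _ d rfl p hp).2 hd
            exact hres
          · have hv₁A : v₁ ∈ d.support.toFinset \ ({i, b} : Finset V) := by
              simp [hv₁, h₂.ne', SimpleGraph.Walk.start_mem_support]
            obtain ⟨u, p', hu, rfl, hcov'⟩ := cov_extract hv₁A hp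
            have hjne : b ∉ (d.support.toFinset \ ({i, b} : Finset V)).erase v₁ := by simp
            have hel : (SimpleGraph.Walk.cons h d.reverse).length = d.length + 1 := by simp
            have heint : walkInterior (SimpleGraph.Walk.cons h d.reverse)
                = d.support.toFinset \ ({i, v₁} : Finset V) := by
              simp only [walkInterior, SimpleGraph.Walk.support_cons,
                SimpleGraph.Walk.support_reverse, List.toFinset_cons, List.toFinset_reverse]
              exact Finset.insert_sdiff_of_mem _ (by simp)
            have hsub : walkInterior (SimpleGraph.Walk.cons h d.reverse)
                ⊆ insert b ((d.support.toFinset \ ({i, b} : Finset V)).erase v₁) := by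
              rw [heint]
              intro x hx
              simp only [Finset.mem_sdiff, Finset.mem_insert, Finset.mem_erase,
                List.mem_toFinset, Finset.mem_singleton] at hx ⊢
              by_cases hxb : x = b
              · exact Or.inl hxb
              · tauto
            have hoddlen : Odd (d.length + 1) := by
              obtain ⟨c, hc⟩ := hd; exact ⟨c, by omega⟩
            rcases hu with rfl | rfl
            · have hcov2 := cov_insert hjne hcov' (Or.inr rfl)
              have hmem := (IH (d.length + 1) (by simp only [SimpleGraph.Walk.length_cons]; omega) _ _ (SimpleGraph.Walk.cons h d.reverse)
                hel _ (cov_mono hsub hcov2)).1 hoddlen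
              have key : geven k i b * (X (Sum.inl v₁) * p')
                  = (-(X (Sum.inr i) * p')) * godd k b v₁
                    + godd k i v₁ * (X (Sum.inr b) * p') := by
                simp only [geven, godd]; ring
              rw [key]
              exact Ideal.add_mem _ (Ideal.mul_mem_left _ _ (gen_mem G h₂)) hmem
            · have hcov2 := cov_insert hjne hcov' (Or.inl rfl)
              have hmem := (IH (d.length + 1) (by simp only [SimpleGraph.Walk.length_cons]; omega) _ _ (SimpleGraph.Walk.cons h d.reverse)
                hel _ (cov_mono hsub hcov2)).1 hoddlen
              have key : geven k i b * (X (Sum.inr v₁) * p')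
                  = (-(X (Sum.inl i) * p')) * godd k b v₁
                    + godd k i v₁ * (X (Sum.inl b) * p') := by
                simp only [geven, godd]; ring
              rw [key]
              exact Ideal.add_mem _ (Ideal.mul_mem_left _ _ (gen_mem G h₂)) hmem
    · have hbA : b ∈ w'.support.toFinset \ ({i, j} : Finset V) := by
        simp [h.ne', hbj, SimpleGraph.Walk.start_mem_support]
      obtain ⟨u, p', hu, rfl, hcov'⟩ := cov_extract hbA hp
      have hi : i ∉ (w'.support.toFinset \ ({i, j} : Finset V)).erase b := by simp
      have hsub : walkInterior w'
          ⊆ insert i ((w'.support.toFinset \ ({i, j} : Finset V)).erase b) := by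
        simp only [walkInterior]
        intro x hx
        simp only [Finset.mem_sdiff, Finset.mem_insert, Finset.mem_erase,
          List.mem_toFinset, Finset.mem_singleton] at hx ⊢
        by_cases hxi : x = i
        · exact Or.inl hxi
        · tauto
      rcases hu with rfl | rfl
      · have hcov2 := cov_mono hsub (cov_insert hi hcov' (Or.inr rfl))
        have IH' := IH w'.length (by omega) _ _ w' rfl _ hcov2
        constructor
        · intro hoddn
          have hev : Even w'.length := by
            obtain ⟨c, hc⟩ := hoddn; exact ⟨c, by omega⟩
          have hmem := IH'.2 hev
          have key : godd k i j * (X (Sum.inl b) * p')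
              = (X (Sum.inl j) * p') * godd k i b
                + (-1) * (geven k b j * (X (Sum.inr i) * p')) := by
            simp only [godd, geven]; ring
          rw [key]
          exact Ideal.add_mem _ (Ideal.mul_mem_left _ _ (gen_mem G h))
            (Ideal.mul_mem_left _ _ hmem)
        · intro hevn
          have hod : Odd w'.length := by
            obtain ⟨c, hc⟩ := hevn; exact ⟨c - 1, by omega⟩
          have hmem := IH'.1 hod
          have key : geven k i j * (X (Sum.inl b) * p')
              = (X (Sum.inr j) * p') * godd k i b
                + (-1) * (godd k b j * (X (Sum.inr i) * p')) := by
            simp only [godd, geven]; ring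
          rw [key]
          exact Ideal.add_mem _ (Ideal.mul_mem_left _ _ (gen_mem G h))
            (Ideal.mul_mem_left _ _ hmem)
      · have hcov2 := cov_mono hsub (cov_insert hi hcov' (Or.inl rfl))
        have IH' := IH w'.length (by omega) _ _ w' rfl _ hcov2
        constructor
        · intro hoddn
          have hev : Even w'.length := by
            obtain ⟨c, hc⟩ := hoddn; exact ⟨c, by omega⟩
          have hmem := IH'.2 hev
          have key : godd k i j * (X (Sum.inr b) * p')
              = (X (Sum.inr j) * p') * godd k i b
                + (-1) * (geven k b j * (X (Sum.inl i) * p')) := by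
            simp only [godd, geven]; ring
          rw [key]
          exact Ideal.add_mem _ (Ideal.mul_mem_left _ _ (gen_mem G h))
            (Ideal.mul_mem_left _ _ hmem)
        · intro hevn
          have hod : Odd w'.length := by
            obtain ⟨c, hc⟩ := hevn; exact ⟨c - 1, by omega⟩
          have hmem := IH'.1 hod
          have key : geven k i j * (X (Sum.inr b) * p')
              = (X (Sum.inl j) * p') * godd k i b
                + (-1) * (godd k b j * (X (Sum.inl i) * p')) := by
            simp only [godd, geven]; ring
          rw [key]
          exact Ideal.add_mem _ (Ideal.mul_mem_left _ _ (gen_mem G h))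
            (Ideal.mul_mem_left _ _ hmem)

end PbeiProof

theorem walk_binomials_mem_pbei
    {k : Type*} [Field k] {V : Type*} [DecidableEq V] (G : SimpleGraph V)
    (i j : V) (w : G.Walk i j) (t : V → MvPolynomial (V ⊕ V) k)
    (ht : ∀ v, t v = X (Sum.inl v) ∨ t v = X (Sum.inr v)) :
    (Odd w.length →
      (X (Sum.inl i) * X (Sum.inl j) - X (Sum.inr i) * X (Sum.inr j)) *
        ∏ v ∈ walkInterior w, t v ∈ pbei k G) ∧
    (Even w.length →
      (X (Sum.inl i) * X (Sum.inr j) - X (Sum.inr i) * X (Sum.inl j)) *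
        ∏ v ∈ walkInterior w, t v ∈ pbei k G) := by
  have hcov : PbeiProof.Cov (walkInterior w) (∏ v ∈ walkInterior w, t v) :=
    ⟨t, 1, ht, (mul_one _).symm⟩
  have hmain := PbeiProof.main G w.length i j w rfl _ hcov
  exact ⟨fun hh => hmain.1 hh, fun hh => hmain.2 hh⟩
end
end

section
/- If a vertex i of a graph G lies in a connected component of G containing an odd cycle, then there exists a monomial m in k[x,y] (a product of indeterminates t_k ∈ {x_k, y_k} over interior vertices of a suitable closed odd walk at i) such that m·(x_i² − y_i²) belongs to the parity binomial edge ideal I(G). -/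
open MvPolynomial

noncomputable section

/-- The binomial attached to a walk of length `n` from `a` to `b`. -/
def pbin (k : Type*) [Field k] {V : Type*} (n : ℕ) (a b : V) :
    MvPolynomial (V ⊕ V) k :=
  if Odd n then X (Sum.inl a) * X (Sum.inl b) - X (Sum.inr a) * X (Sum.inr b)
  else X (Sum.inl a) * X (Sum.inr b) - X (Sum.inr a) * X (Sum.inl b)

lemma pbin_odd {k : Type*} [Field k] {V : Type*} {n : ℕ} (hn : Odd n) (a b : V) :
    pbin k n a b = X (Sum.inl a) * X (Sum.inl b) - X (Sum.inr a) * X (Sum.inr b) :=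
  if_pos hn

lemma pbin_even {k : Type*} [Field k] {V : Type*} {n : ℕ} (hn : Even n) (a b : V) :
    pbin k n a b = X (Sum.inl a) * X (Sum.inr b) - X (Sum.inr a) * X (Sum.inl b) :=
  if_neg (by simpa [Nat.not_odd_iff_even] using hn)

lemma gen_mem {k : Type*} [Field k] {V : Type*} {G : SimpleGraph V} {u v : V}
    (h : G.Adj u v) :
    X (Sum.inl u) * X (Sum.inl v) - X (Sum.inr u) * X (Sum.inr v) ∈ pbei k G :=
  Ideal.subset_span ⟨u, v, h, rfl⟩

/-- Auxiliary: absorbing an extra factor `q` at position `a` into a product. -/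
lemma absorb {k : Type*} [Field k] {V : Type*} [DecidableEq V]
    (S : Finset V) (a : V) (q : MvPolynomial (V ⊕ V) k) (t : V → MvPolynomial (V ⊕ V) k) :
    ∃ r : MvPolynomial (V ⊕ V) k,
      q * ∏ v ∈ S, t v = r * ∏ v ∈ insert a S, Function.update t a q v := by
  have hupd : ∀ v, v ≠ a → Function.update t a q v = t v := by
    intro v hv
    exact Function.update_of_ne hv q t
  by_cases ha : a ∈ S
  · refine ⟨t a, ?_⟩
    rw [Finset.insert_eq_self.mpr ha]
    rw [← Finset.mul_prod_erase S t ha, ← Finset.mul_prod_erase S (Function.update t a q) ha,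
      Function.update_self]
    rw [Finset.prod_congr rfl (fun v hv => hupd v (Finset.ne_of_mem_erase hv))]
    ring
  · refine ⟨1, ?_⟩
    rw [Finset.prod_insert ha, Function.update_self]
    rw [Finset.prod_congr rfl (fun v hv => hupd v (fun h => ha (h ▸ hv)))]
    ring

/-- The master lemma: for any walk `w : a ⇝ b` of length `n`, any choice `t` of
one indeterminate per vertex, and any finset `F` containing the interior support,
the product of `t` over `F` times the walk binomial lies in the ideal. -/
lemma master {k : Type*} [Field k] {V : Type*} [DecidableEq V] (G : SimpleGraph V)
    (n : ℕ) : ∀ {a b : V} (w : G.Walk a b), w.length = n →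
    ∀ t : V → MvPolynomial (V ⊕ V) k,
      (∀ v, t v = X (Sum.inl v) ∨ t v = X (Sum.inr v)) →
    ∀ F : Finset V, w.support.toFinset \ {a, b} ⊆ F →
      (∏ v ∈ F, t v) * pbin k n a b ∈ pbei k G := by
  induction n using Nat.strong_induction_on with
  | _ n IH =>
  intro a b w hw t ht F hF
  cases w with
  | nil =>
    obtain rfl : n = 0 := by simpa using hw.symm
    have h0 : pbin k 0 a a = 0 := by
      rw [pbin_even (by decide)]; ring
    rw [h0, mul_zero]; exact Ideal.zero_mem _
  | @cons _ c _ h w' =>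
    obtain rfl : n = w'.length + 1 := by simpa using hw.symm
    by_cases hcF : c ∈ F
    · -- pull the factor `t c` out of the product
      rw [← Finset.mul_prod_erase F t hcF]
      obtain ⟨s, hs, u, key⟩ : ∃ s, (s = X (Sum.inl a) ∨ s = X (Sum.inr a)) ∧
          ∃ u, t c * pbin k (w'.length + 1) a b
            = u * (X (Sum.inl a) * X (Sum.inl c) - X (Sum.inr a) * X (Sum.inr c))
              - s * pbin k w'.length c b := by
        rcases Nat.even_or_odd w'.length with hm | hm
        · rcases ht c with htc | htc
          · exact ⟨X (Sum.inr a), Or.inr rfl, X (Sum.inl b), by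
              rw [htc, pbin_odd (Even.add_one hm), pbin_even hm]; ring⟩
          · exact ⟨X (Sum.inl a), Or.inl rfl, X (Sum.inr b), by
              rw [htc, pbin_odd (Even.add_one hm), pbin_even hm]; ring⟩
        · rcases ht c with htc | htc
          · exact ⟨X (Sum.inr a), Or.inr rfl, X (Sum.inr b), by
              rw [htc, pbin_even (Odd.add_one hm), pbin_odd hm]; ring⟩
          · exact ⟨X (Sum.inl a), Or.inl rfl, X (Sum.inl b), by
              rw [htc, pbin_even (Odd.add_one hm), pbin_odd hm]; ring⟩
      have key2 : (t c * ∏ v ∈ F.erase c, t v) * pbin k (w'.length + 1) a b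
          = ((∏ v ∈ F.erase c, t v) * u)
              * (X (Sum.inl a) * X (Sum.inl c) - X (Sum.inr a) * X (Sum.inr c))
            - (s * ∏ v ∈ F.erase c, t v) * pbin k w'.length c b := by
        calc (t c * ∏ v ∈ F.erase c, t v) * pbin k (w'.length + 1) a b
            = (∏ v ∈ F.erase c, t v) * (t c * pbin k (w'.length + 1) a b) := by ring
          _ = _ := by rw [key]; ring
      rw [key2]
      refine sub_mem ?_ ?_
      · exact Ideal.mul_mem_left _ _ (gen_mem h)
      · obtain ⟨r, hr⟩ := absorb (F.erase c) a s t
        rw [hr, mul_assoc]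
        refine Ideal.mul_mem_left _ _ (IH w'.length (by omega) w' rfl _ ?_ _ ?_)
        · intro v
          rcases eq_or_ne v a with rfl | hv
          · simpa [Function.update_self] using hs
          · rw [Function.update_of_ne hv]; exact ht v
        · intro v hv
          simp only [Finset.mem_sdiff, List.mem_toFinset, Finset.mem_insert,
            Finset.mem_singleton, not_or] at hv
          obtain ⟨hv1, hvc, hvb⟩ := hv
          rcases eq_or_ne v a with rfl | hva
          · exact Finset.mem_insert_self _ _
          · refine Finset.mem_insert_of_mem (Finset.mem_erase.mpr ⟨hvc, hF ?_⟩)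
            simp only [Finset.mem_sdiff, List.mem_toFinset,
              SimpleGraph.Walk.support_cons, List.mem_cons, Finset.mem_insert,
              Finset.mem_singleton, not_or]
            exact ⟨Or.inr hv1, hva, hvb⟩
    · -- the second vertex is not in `F`, so it must be `b`
      have hcb : c = b := by
        by_contra hcb
        exact hcF (hF (by
          simp only [Finset.mem_sdiff, List.mem_toFinset, SimpleGraph.Walk.support_cons,
            List.mem_cons, Finset.mem_insert, Finset.mem_singleton, not_or]
          exact ⟨Or.inr w'.start_mem_support, h.ne', hcb⟩))
      subst hcb
      rcases Nat.even_or_odd (w'.length + 1) with hpar | hpar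
      · -- even case: `w'` is a closed odd walk at the endpoint `c`
        cases w' with
        | nil => simp at hpar
        | @cons _ d _ h2 w₁ =>
          have hm : Odd (w₁.length + 1) :=
            Nat.not_even_iff_odd.mp (Nat.even_add_one.mp (by
              simpa [SimpleGraph.Walk.length_cons] using hpar))
          by_cases hdF : d ∈ F
          · rw [← Finset.mul_prod_erase F t hdF]
            obtain ⟨s, hs, u, key⟩ : ∃ s, (s = X (Sum.inl c) ∨ s = X (Sum.inr c)) ∧
                ∃ u, t d * pbin k ((SimpleGraph.Walk.cons h2 w₁).length + 1) a c
                  = s * pbin k (w₁.length + 1) a d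
                    - u * (X (Sum.inl c) * X (Sum.inl d) - X (Sum.inr c) * X (Sum.inr d)) := by
              rcases ht d with htd | htd
              · exact ⟨X (Sum.inr c), Or.inr rfl, X (Sum.inr a), by
                  rw [htd, pbin_even hpar, pbin_odd hm]; ring⟩
              · exact ⟨X (Sum.inl c), Or.inl rfl, X (Sum.inl a), by
                  rw [htd, pbin_even hpar, pbin_odd hm]; ring⟩
            have key2 : (t d * ∏ v ∈ F.erase d, t v)
                  * pbin k ((SimpleGraph.Walk.cons h2 w₁).length + 1) a c
                = (s * ∏ v ∈ F.erase d, t v) * pbin k (w₁.length + 1) a d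
                  - ((∏ v ∈ F.erase d, t v) * u)
                    * (X (Sum.inl c) * X (Sum.inl d) - X (Sum.inr c) * X (Sum.inr d)) := by
              calc (t d * ∏ v ∈ F.erase d, t v)
                    * pbin k ((SimpleGraph.Walk.cons h2 w₁).length + 1) a c
                  = (∏ v ∈ F.erase d, t v)
                    * (t d * pbin k ((SimpleGraph.Walk.cons h2 w₁).length + 1) a c) := by ring
                _ = _ := by rw [key]; ring
            rw [key2]
            refine sub_mem ?_ ?_
            · obtain ⟨r, hr⟩ := absorb (F.erase d) c s t
              rw [hr, mul_assoc]
              refine Ideal.mul_mem_left _ _ (IH (w₁.length + 1)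
                (by rw [SimpleGraph.Walk.length_cons]; omega)
                (SimpleGraph.Walk.cons h w₁.reverse) (by simp) _ ?_ _ ?_)
              · intro v
                rcases eq_or_ne v c with rfl | hv
                · simpa [Function.update_self] using hs
                · rw [Function.update_of_ne hv]; exact ht v
              · intro v hv
                simp only [Finset.mem_sdiff, List.mem_toFinset,
                  SimpleGraph.Walk.support_cons, SimpleGraph.Walk.support_reverse,
                  List.mem_cons, List.mem_reverse, Finset.mem_insert,
                  Finset.mem_singleton, not_or] at hv
                obtain ⟨hv1, hva, hvd⟩ := hv
                rcases eq_or_ne v c with rfl | hvc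
                · exact Finset.mem_insert_self _ _
                · refine Finset.mem_insert_of_mem (Finset.mem_erase.mpr ⟨hvd, hF ?_⟩)
                  simp only [Finset.mem_sdiff, List.mem_toFinset,
                    SimpleGraph.Walk.support_cons, List.mem_cons, Finset.mem_insert,
                    Finset.mem_singleton, not_or]
                  rcases hv1 with rfl | hv1
                  · exact absurd rfl hva
                  · exact ⟨Or.inr (Or.inr hv1), hva, hvc⟩
            · exact Ideal.mul_mem_left _ _ (gen_mem h2)
          · have hda : d = a := by
              by_contra hda
              exact hdF (hF (by
                simp only [Finset.mem_sdiff, List.mem_toFinset,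
                  SimpleGraph.Walk.support_cons, List.mem_cons, Finset.mem_insert,
                  Finset.mem_singleton, not_or]
                exact ⟨Or.inr (Or.inr w₁.start_mem_support), hda, h2.ne'⟩))
            subst hda
            have he : Even w₁.length := by
              rw [SimpleGraph.Walk.length_cons, Nat.even_add_one] at hpar
              rw [Nat.even_iff]
              rw [Nat.even_iff] at hpar
              omega
            have hmem := IH w₁.length (by rw [SimpleGraph.Walk.length_cons]; omega) w₁ rfl t ht F
              (by
                intro v hv
                simp only [Finset.mem_sdiff, List.mem_toFinset, Finset.mem_insert,
                  Finset.mem_singleton, not_or] at hv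
                obtain ⟨hv1, hva, hvc⟩ := hv
                refine hF ?_
                simp only [Finset.mem_sdiff, List.mem_toFinset,
                  SimpleGraph.Walk.support_cons, List.mem_cons, Finset.mem_insert,
                  Finset.mem_singleton, not_or]
                exact ⟨Or.inr (Or.inr hv1), hva, hvc⟩)
            have hbin : pbin k ((SimpleGraph.Walk.cons h2 w₁).length + 1) d c
                = pbin k w₁.length d c := by rw [pbin_even hpar, pbin_even he]
            rw [hbin]
            exact hmem
      · rw [pbin_odd hpar]
        exact Ideal.mul_mem_left _ _ (gen_mem h)

/-- If a vertex `i` lies in a connected component of `G` containing an odd cycle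
(i.e. a closed walk of odd length), then there is a monomial `m`, a product of
indeterminates `t_k ∈ {x_k, y_k}` over the interior vertices of a suitable closed
odd walk at `i`, with `m * (x_i² - y_i²) ∈ I(G)`. -/
theorem monomial_mul_sq_diff_mem_pbei
    {k : Type*} [Field k] {V : Type*} [DecidableEq V] (G : SimpleGraph V) (i : V)
    (h : ∃ (c : V) (w : G.Walk c c), Odd w.length ∧ G.Reachable i c) :
    ∃ (w : G.Walk i i), Odd w.length ∧
      ∃ m : MvPolynomial (V ⊕ V) k,
        (∃ t : V → MvPolynomial (V ⊕ V) k,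
          (∀ v, t v = X (Sum.inl v) ∨ t v = X (Sum.inr v)) ∧
          m = ∏ v ∈ w.support.toFinset \ {i}, t v) ∧
        m * (X (Sum.inl i) ^ 2 - X (Sum.inr i) ^ 2) ∈ pbei k G := by
  obtain ⟨c, w₀, hodd, hreach⟩ := h
  obtain ⟨p⟩ := hreach
  refine ⟨p.append (w₀.append p.reverse), ?_, _,
    ⟨fun v => X (Sum.inl v), fun v => Or.inl rfl, rfl⟩, ?_⟩
  · have h1 : (p.append (w₀.append p.reverse)).length
        = p.length + (w₀.length + p.length) := by
      simp [SimpleGraph.Walk.length_append, SimpleGraph.Walk.length_reverse]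
    rw [h1, Nat.odd_iff]
    rw [Nat.odd_iff] at hodd
    omega
  · have hlen : Odd (p.append (w₀.append p.reverse)).length := by
      have h1 : (p.append (w₀.append p.reverse)).length
          = p.length + (w₀.length + p.length) := by
        simp [SimpleGraph.Walk.length_append, SimpleGraph.Walk.length_reverse]
      rw [h1, Nat.odd_iff]
      rw [Nat.odd_iff] at hodd
      omega
    have hm := master (k := k) G (p.append (w₀.append p.reverse)).length
      (p.append (w₀.append p.reverse)) rfl (fun v => X (Sum.inl v))
      (fun v => Or.inl rfl) ((p.append (w₀.append p.reverse)).support.toFinset \ {i})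
      (by simp)
    have hb : pbin k (p.append (w₀.append p.reverse)).length i i
        = X (Sum.inl i) ^ 2 - X (Sum.inr i) ^ 2 := by
      rw [pbin_odd hlen]; ring
    rwa [hb] at hm
end
end

section
/- Apart from zero rows, the Smith normal form of the (2|V|) × |E| matrix formed by stacking A_G on top of −A_G, where A_G is the incidence matrix of a finite graph G, is the diagonal matrix with |V| − c(G) entries equal to 1 and c₁(G) entries equal to 2, where c(G) is the number of connected components of G and c₁(G) the number of connected components containing an odd cycle. -/
noncomputable section

open scoped Classical

variable {V : Type*} [Fintype V] [DecidableEq V]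

/-- The number of connected components of `G`. -/
def numComp (G : SimpleGraph V) : ℕ := Nat.card G.ConnectedComponent

/-- The number of connected components of `G` containing an odd cycle
(a closed walk of odd length). -/
def numOddComp (G : SimpleGraph V) : ℕ :=
  Nat.card {C : G.ConnectedComponent //
    ∃ v, G.connectedComponentMk v = C ∧ ∃ w : G.Walk v v, Odd w.length}

/-- The incidence-type matrix `(A_G; -A_G)` with rows indexed by `V ⊕ V`:
the column of the edge `{i,j}` is `e_i + e_j` on top and `-(e_i + e_j)` below. -/
def stackedIncidence (G : SimpleGraph V) {M : ℕ} (ε : Fin M ≃ G.edgeSet) :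
    Matrix (V ⊕ V) (Fin M) ℤ :=
  fun p e => match p with
    | Sum.inl v => if v ∈ (ε e : Sym2 V) then 1 else 0
    | Sum.inr v => if v ∈ (ε e : Sym2 V) then -1 else 0

/-!
Root every connected component at a vertex `r` and let `depth v` be the distance from the root of
its component. Each non-root vertex `v` has a neighbour `parent v` of smaller depth; the columns
`e_v + e_{parent v}` of these tree edges, together with the vectors `e_r`, form a basis of `ℤ^V`
(triangular in the depth). Alternating sums of tree columns along the path from `v` to `r` give
`e_v - (-1)^{depth v} e_r`, so the column of an edge `uw` is a combination of tree columns when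
`depth u + depth w` is odd, and is such a combination plus `± 2 e_r` otherwise. An edge of the
second kind exists in a component exactly when the component has an odd closed walk. Choosing one
per such component, every other column reduces to zero, so in the resulting bases the incidence
matrix is `diag(1, …, 1, 2, …, 2, 0, …)`. For the stacked matrix, use the rows `(x, -x)` for `x`
in that basis of `ℤ^V`, together with the unit vectors of the lower copy of `ℤ^V`.
-/

open Submodule Set Matrix

section

variable {X Y : Type*} {a b L : ℕ}

def finSumEquivOfAdd (α : X ≃ Fin a) (β : Y ≃ Fin b) (h : a + b = L) : Fin L ≃ X ⊕ Y :=
  (finCongr h.symm).trans (finSumFinEquiv.symm.trans (Equiv.sumCongr α.symm β.symm))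

variable (α : X ≃ Fin a) (β : Y ≃ Fin b) (h : a + b = L)

theorem finSumEquivOfAdd_apply_of_lt (i : Fin L) (hi : (i : ℕ) < a) :
    finSumEquivOfAdd α β h i = .inl (α.symm ⟨i, hi⟩) := by
  have : finCongr h.symm i = Fin.castAdd b ⟨i, hi⟩ := rfl
  simp only [finSumEquivOfAdd, Equiv.trans_apply, this, finSumFinEquiv_symm_apply_castAdd,
    Equiv.sumCongr_apply, Sum.map_inl]

theorem finSumEquivOfAdd_apply_of_le (i : Fin L) (hi : a ≤ (i : ℕ)) :
    finSumEquivOfAdd α β h i = .inr (β.symm ⟨i - a, by omega⟩) := by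
  have : finCongr h.symm i = Fin.natAdd a ⟨i - a, by omega⟩ := Fin.ext (by simp; omega)
  simp only [finSumEquivOfAdd, Equiv.trans_apply, this, finSumFinEquiv_symm_apply_natAdd,
    Equiv.sumCongr_apply, Sum.map_inr]

end

namespace Matrix

variable {R : Type*} [CommRing R]

theorem isUnit_det_of_span_col_eq_top {m : Type*} [Fintype m] [DecidableEq m] {A : Matrix m m R}
    (h : span R (range A.col) = ⊤) : IsUnit A.det := by
  have hA : Function.Surjective A.mulVecLin :=
    LinearMap.range_eq_top.1 (by rw [range_mulVecLin, h])
  exact (isUnit_iff_isUnit_det A).1 (mulVec_surjective_iff_isUnit.1 hA)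

theorem exists_isUnit_det_mul_mul_eq {m n : Type*} [Fintype m] [DecidableEq m] [Fintype n]
    [DecidableEq n] (B D : Matrix m n R) (p : m → m → R) (q : n → n → R)
    (hp : span R (range p) = ⊤) (hq : span R (range q) = ⊤)
    (h : ∀ j, B *ᵥ q j = ∑ i, D i j • p i) :
    ∃ (U : Matrix m m R) (W : Matrix n n R), IsUnit U.det ∧ IsUnit W.det ∧ U * B * W = D := by
  set P : Matrix m m R := (of p)ᵀ
  have hP : IsUnit P.det := isUnit_det_of_span_col_eq_top hp
  have hBQ : B * (of q)ᵀ = P * D := by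
    ext i j
    have := congrFun (h j) i
    simp only [mulVec, dotProduct, Finset.sum_apply, Pi.smul_apply, smul_eq_mul] at this
    simp only [mul_apply, transpose_apply, of_apply, P, this, mul_comm]
  refine ⟨P⁻¹, (of q)ᵀ, isUnit_nonsing_inv_det P hP, isUnit_det_of_span_col_eq_top hq, ?_⟩
  rw [Matrix.mul_assoc, hBQ, ← Matrix.mul_assoc, nonsing_inv_mul P hP, Matrix.one_mul]

theorem exists_isUnit_det_mul_mul_eq_diag {N M : ℕ} (B : Matrix (Fin N) (Fin M) R) (d : ℕ → R)
    (p : Fin N → Fin N → R) (q : Fin M → Fin M → R)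
    (hp : span R (range p) = ⊤) (hq : span R (range q) = ⊤)
    (h : ∀ j, B *ᵥ q j = if hj : (j : ℕ) < N then d j • p ⟨j, hj⟩ else 0) :
    ∃ (U : Matrix (Fin N) (Fin N) R) (W : Matrix (Fin M) (Fin M) R),
      IsUnit U.det ∧ IsUnit W.det ∧ ∀ i j, (U * B * W) i j = if (i : ℕ) = j then d j else 0 := by
  obtain ⟨U, W, hU, hW, hUW⟩ := exists_isUnit_det_mul_mul_eq B
    (of fun i j => if (i : ℕ) = j then d j else 0) p q hp hq fun j => by
      rw [h j]
      split_ifs with hj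
      · rw [Finset.sum_eq_single ⟨j, hj⟩ (fun i _ hi => by
          rw [of_apply, if_neg fun h => hi (Fin.ext h), zero_smul]) (by simp)]
        simp
      · exact (Finset.sum_eq_zero fun i _ => by
          rw [of_apply, if_neg (by omega), zero_smul]).symm
  exact ⟨U, W, hU, hW, fun i j => by rw [hUW, of_apply]⟩

theorem exists_isUnit_det_mul_reindex_mul_eq
    {m K₁ K₂ Z₁ Z₂ : Type*} [Fintype m] [DecidableEq m] [Fintype K₁] [Fintype K₂] [Fintype Z₁]
    [Fintype Z₂] {N M : ℕ} (B : Matrix m (Fin M) R) (ρ : m ≃ Fin N) (c : R)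
    (p : (K₁ ⊕ K₂) ⊕ Z₁ → m → R) (q : (K₁ ⊕ K₂) ⊕ Z₂ → Fin M → R)
    (hp : span R (range p) = ⊤) (hq : span R (range q) = ⊤)
    (hN : Fintype.card K₁ + Fintype.card K₂ + Fintype.card Z₁ = N)
    (hM : Fintype.card K₁ + Fintype.card K₂ + Fintype.card Z₂ = M)
    (h₁ : ∀ k, B *ᵥ q (.inl (.inl k)) = p (.inl (.inl k)))
    (h₂ : ∀ k, B *ᵥ q (.inl (.inr k)) = c • p (.inl (.inr k)))
    (h₀ : ∀ z, B *ᵥ q (.inr z) = 0) :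
    ∃ (U : Matrix (Fin N) (Fin N) R) (W : Matrix (Fin M) (Fin M) R),
      IsUnit U.det ∧ IsUnit W.det ∧
      ∀ i j, (U * reindex ρ (Equiv.refl (Fin M)) B * W) i j =
        if (i : ℕ) = j ∧ (j : ℕ) < Fintype.card K₁ then 1
        else if (i : ℕ) = j ∧ (j : ℕ) < Fintype.card K₁ + Fintype.card K₂ then c
        else 0 := by
  set a := Fintype.card K₁
  set s := a + Fintype.card K₂
  set eK := finSumEquivOfAdd (Fintype.equivFin K₁) (Fintype.equivFin K₂) rfl
  set eR := finSumEquivOfAdd eK.symm (Fintype.equivFin Z₁) hN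
  set eC := finSumEquivOfAdd eK.symm (Fintype.equivFin Z₂) hM
  have hp' : span R (range fun i => p (eR i) ∘ ρ.symm) = ⊤ := by
    rw [← LinearEquiv.range (LinearEquiv.funCongrLeft R R ρ.symm), LinearMap.range_eq_map, ← hp,
      map_span, ← range_comp, ← eR.surjective.range_comp]
    rfl
  have hq' : span R (range fun j => q (eC j)) = ⊤ := by
    rw [← hq, ← eC.surjective.range_comp]; rfl
  obtain ⟨U, W, hU, hW, hUW⟩ := exists_isUnit_det_mul_mul_eq_diag (reindex ρ (.refl _) B)
    (fun j => if j < a then 1 else if j < s then c else 0) _ _ hp' hq' fun j => by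
      change (B *ᵥ q (eC j)) ∘ ρ.symm = _
      by_cases hj : (j : ℕ) < s
      · rw [finSumEquivOfAdd_apply_of_lt _ _ hM _ hj, dif_pos (by omega),
          finSumEquivOfAdd_apply_of_lt _ _ hN _ hj]
        by_cases hja : (j : ℕ) < a
        · have hK : eK ⟨j, hj⟩ = .inl _ := finSumEquivOfAdd_apply_of_lt _ _ rfl _ hja
          simp [hK, hja, h₁]
        · have hK : eK ⟨j, hj⟩ = .inr _ := finSumEquivOfAdd_apply_of_le _ _ rfl _ (not_lt.1 hja)
          simp [hK, hja, hj, h₂, Pi.smul_comp]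
      · have hja : ¬ (j : ℕ) < a := fun h => hj (Nat.lt_add_right _ h)
        rw [finSumEquivOfAdd_apply_of_le _ _ hM _ (not_lt.1 hj), h₀]
        simp [hj, hja]
  refine ⟨U, W, hU, hW, fun i j => ?_⟩
  rw [hUW]
  split_ifs <;> simp_all

end Matrix

theorem Submodule.eq_top_of_forall_single_mem {R ι : Type*} [CommRing R] [Finite ι]
    [DecidableEq ι] {S : Submodule R (ι → R)} (h : ∀ i, Pi.single i 1 ∈ S) : S = ⊤ := by
  rw [eq_top_iff, ← (Pi.basisFun R ι).span_eq, span_le]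
  rintro _ ⟨i, rfl⟩
  simpa using h i

section Stacking

variable (R m : Type*) [CommRing R]

def stackNeg : (m → R) →ₗ[R] (m ⊕ m → R) where
  toFun x := Sum.elim x (-x)
  map_add' x y := by ext (_ | _) <;> simp [add_comm]
  map_smul' c x := by ext (_ | _) <;> simp

variable {R m} [DecidableEq m] {ι : Type*}

def stackNegFamily (p : ι → m → R) : ι ⊕ m → m ⊕ m → R :=
  Sum.elim (stackNeg R m ∘ p) fun v => Pi.single (.inr v) 1

theorem span_range_stackNegFamily [Finite m] {p : ι → m → R} (hp : span R (range p) = ⊤) :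
    span R (range (stackNegFamily p)) = ⊤ := by
  have hstack : ∀ x, stackNeg R m x ∈ span R (range (stackNegFamily p)) := by
    intro x
    have hx := mem_map_of_mem (f := stackNeg R m) (hp ▸ mem_top : x ∈ span R (range p))
    rw [map_span, ← range_comp] at hx
    refine span_mono ?_ hx
    exact range_subset_iff.2 fun i => ⟨.inl i, rfl⟩
  refine eq_top_of_forall_single_mem fun i => ?_
  rcases i with v | v
  · have : Pi.single (Sum.inl v) (1 : R) = stackNeg R m (Pi.single v 1) + Pi.single (.inr v) 1 := by
      ext (w | w) <;> simp [stackNeg, Pi.single_apply]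
    rw [this]
    exact add_mem (hstack _) (subset_span ⟨.inr v, rfl⟩)
  · exact subset_span ⟨.inr v, rfl⟩

end Stacking

namespace SimpleGraph

section Forest

omit [Fintype V] [DecidableEq V]

variable (G : SimpleGraph V)

def root (v : V) : V := (G.connectedComponentMk v).out

def depth (v : V) : ℕ := G.dist (G.root v) v

def depthSign (v : V) : ℤ := (-1) ^ G.depth v

abbrev NonRoot : Type _ := {v : V // G.root v ≠ v}

def HasOddClosedWalk (C : G.ConnectedComponent) : Prop :=
  ∃ v, G.connectedComponentMk v = C ∧ ∃ w : G.Walk v v, Odd w.length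

abbrev OddComponent : Type _ := {C : G.ConnectedComponent // G.HasOddClosedWalk C}

abbrev EvenComponent : Type _ := {C : G.ConnectedComponent // ¬ G.HasOddClosedWalk C}

variable {G}

theorem reachable_root (v : V) : G.Reachable (G.root v) v :=
  ConnectedComponent.exact (Quot.out_eq _)

theorem root_eq_of_reachable {u v : V} (h : G.Reachable u v) : G.root u = G.root v := by
  rw [root, root, ConnectedComponent.eq.mpr h]

theorem root_eq_out {v : V} {C : G.ConnectedComponent} (h : G.connectedComponentMk v = C) :
    G.root v = C.out := by
  rw [root, h]

theorem depth_eq_zero_iff {v : V} : G.depth v = 0 ↔ G.root v = v :=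
  (reachable_root v).dist_eq_zero_iff

theorem exists_adj_depth_add_one {v : V} (h : G.root v ≠ v) :
    ∃ u, G.Adj v u ∧ G.depth u + 1 = G.depth v := by
  obtain ⟨p, hp⟩ := (reachable_root v).exists_walk_length_eq_dist
  obtain ⟨u, hvu, q, hq⟩ := p.reverse.exists_eq_cons_of_ne h.symm
  have hru : G.root u = G.root v := root_eq_of_reachable hvu.reachable.symm
  have hle : G.depth u ≤ q.length := by
    rw [depth, hru, dist_comm]; exact dist_le q
  have hge : G.depth v ≤ G.depth u + 1 := by
    rw [depth, depth, hru, ← dist_eq_one_iff_adj.mpr hvu.symm]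
    exact hvu.symm.reachable.dist_triangle_right _
  have hlen : p.length = q.length + 1 := by
    rw [← Walk.length_reverse, hq, Walk.length_cons]
  exact ⟨u, hvu, by unfold depth at *; omega⟩

def parent (v : G.NonRoot) : V := (exists_adj_depth_add_one v.2).choose

theorem adj_parent (v : G.NonRoot) : G.Adj v (G.parent v) :=
  (exists_adj_depth_add_one v.2).choose_spec.1

theorem depth_parent (v : G.NonRoot) : G.depth (G.parent v) + 1 = G.depth v :=
  (exists_adj_depth_add_one v.2).choose_spec.2

theorem root_parent (v : G.NonRoot) : G.root (G.parent v) = G.root v :=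
  root_eq_of_reachable (adj_parent v).reachable.symm

variable (G) in
def treeDart (v : G.NonRoot) : G.Dart := ⟨(v, G.parent v), adj_parent v⟩

theorem depthSign_mul_self (v : V) : G.depthSign v * G.depthSign v = 1 := by
  rw [depthSign, ← pow_add, ← two_mul, pow_mul, neg_one_sq, one_pow]

theorem depthSign_eq_one_of_root_eq {v : V} (h : G.root v = v) : G.depthSign v = 1 := by
  rw [depthSign, depth_eq_zero_iff.mpr h, pow_zero]

theorem depthSign_parent (v : G.NonRoot) : G.depthSign (G.parent v) = -G.depthSign v := by
  rw [depthSign, depthSign, ← depth_parent v, pow_succ, mul_neg_one, neg_neg]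

theorem depthSign_eq_of_even {u w : V} (h : Even (G.depth u + G.depth w)) :
    G.depthSign u = G.depthSign w := by
  have : G.depthSign u * G.depthSign w = 1 := by
    rw [depthSign, depthSign, ← pow_add, h.neg_one_pow]
  rw [← mul_one (G.depthSign u), ← depthSign_mul_self w, ← mul_assoc, this, one_mul]

theorem depthSign_eq_neg_of_odd {u w : V} (h : Odd (G.depth u + G.depth w)) :
    G.depthSign u = -G.depthSign w := by
  have : G.depthSign u * G.depthSign w = -1 := by
    rw [depthSign, depthSign, ← pow_add, h.neg_one_pow]
  rw [← mul_one (G.depthSign u), ← depthSign_mul_self w, ← mul_assoc, this, neg_one_mul]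

theorem hasOddClosedWalk_of_adj_of_even {u w : V} (h : G.Adj u w)
    (heven : Even (G.depth u + G.depth w)) : G.HasOddClosedWalk (G.connectedComponentMk u) := by
  obtain ⟨p, hp⟩ := (reachable_root u).exists_walk_length_eq_dist
  obtain ⟨q, hq⟩ := (reachable_root w).exists_walk_length_eq_dist
  have hrw : G.root w = G.root u := root_eq_of_reachable h.reachable.symm
  refine ⟨G.root u, ConnectedComponent.sound (reachable_root u),
    p.append (.cons h (q.copy hrw rfl).reverse), ?_⟩
  rw [Walk.length_append, Walk.length_cons, Walk.length_reverse, Walk.length_copy, hp, hq]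
  obtain ⟨k, hk⟩ := heven
  exact ⟨k, by unfold depth at hk; omega⟩

theorem even_length_add_depth_add_depth {x y : V}
    (hodd : ∀ u w, G.Reachable x u → G.Adj u w → Odd (G.depth u + G.depth w))
    (p : G.Walk x y) : Even (p.length + G.depth x + G.depth y) := by
  induction p with
  | nil => exact ⟨G.depth _, by rw [Walk.length_nil]; ring⟩
  | @cons x b y hxb q ih =>
    have h₁ := ih fun u w hbu huw => hodd u w (hxb.reachable.trans hbu) huw
    have h₂ := hodd x b .rfl hxb
    rw [Walk.length_cons]
    rw [Nat.even_iff] at h₁ ⊢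
    rw [Nat.odd_iff] at h₂
    omega

theorem exists_dart_even_of_hasOddClosedWalk {C : G.ConnectedComponent}
    (h : G.HasOddClosedWalk C) :
    ∃ d : G.Dart, G.connectedComponentMk d.fst = C ∧ Even (G.depth d.fst + G.depth d.snd) := by
  by_contra! hcon
  obtain ⟨v, rfl, w, hw⟩ := h
  have := even_length_add_depth_add_depth (fun u u' hvu huu' => by
    have := hcon ⟨(u, u'), huu'⟩ (ConnectedComponent.sound hvu.symm)
    rwa [Nat.not_even_iff_odd] at this) w
  rw [Nat.even_iff] at this
  rw [Nat.odd_iff] at hw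
  omega

variable (G) in
def oddDart (C : G.OddComponent) : G.Dart := (exists_dart_even_of_hasOddClosedWalk C.2).choose

theorem connectedComponentMk_oddDart (C : G.OddComponent) :
    G.connectedComponentMk (G.oddDart C).fst = C :=
  (exists_dart_even_of_hasOddClosedWalk C.2).choose_spec.1

theorem even_depth_oddDart (C : G.OddComponent) :
    Even (G.depth (G.oddDart C).fst + G.depth (G.oddDart C).snd) :=
  (exists_dart_even_of_hasOddClosedWalk C.2).choose_spec.2

variable (G) in
def pivotDart : G.NonRoot ⊕ G.OddComponent → G.Dart := Sum.elim G.treeDart G.oddDart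

theorem depth_add_depth_eq_of_edge_eq {d d' : G.Dart} (h : d.edge = d'.edge) :
    G.depth d.fst + G.depth d.snd = G.depth d'.fst + G.depth d'.snd := by
  rcases (dart_edge_eq_iff d d').1 h with rfl | rfl
  · rfl
  · exact add_comm _ _

theorem pivotDart_edge_injective : Function.Injective fun k => (G.pivotDart k).edge := by
  rw [show (fun k => (G.pivotDart k).edge) =
    Sum.elim (fun v => (G.treeDart v).edge) (fun C => (G.oddDart C).edge) by ext (_ | _) <;> rfl]
  refine Function.Injective.sumElim (fun v v' h => ?_) (fun C C' h => ?_) (fun v C h => ?_)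
  · rcases (dart_edge_eq_iff _ _).1 h with h | h
    · exact Subtype.ext (congrArg (·.fst) h)
    · have h₁ := depth_parent v
      have h₂ := depth_parent v'
      have e₁ : (v : V) = G.parent v' := congrArg (·.fst) h
      have e₂ : G.parent v = v' := congrArg (·.snd) h
      rw [e₁] at h₁; rw [← e₂] at h₂
      omega
  · refine Subtype.ext ?_
    rw [← connectedComponentMk_oddDart C, ← connectedComponentMk_oddDart C']
    rcases (dart_edge_eq_iff _ _).1 h with h | h
    · rw [h]
    · rw [h]; exact ConnectedComponent.sound (G.oddDart C').adj.reachable.symm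
  · -- a tree edge joins depths of opposite parity, an `oddDart` depths of equal parity
    have hsum := depth_add_depth_eq_of_edge_eq h
    have htree : G.depth (G.treeDart v).fst + G.depth (G.treeDart v).snd =
        2 * G.depth (G.parent v) + 1 := by
      simp only [treeDart, ← depth_parent v]; ring
    have heven := even_depth_oddDart C
    rw [← hsum, htree] at heven
    exact Nat.not_even_two_mul_add_one _ heven

variable {M : ℕ} (ε : Fin M ≃ G.edgeSet)

def dartIndex (d : G.Dart) : Fin M := ε.symm ⟨d.edge, d.edge_mem⟩

theorem exists_dartIndex_eq (e : Fin M) : ∃ d : G.Dart, dartIndex ε d = e := by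
  obtain ⟨⟨x, hx⟩, rfl⟩ := ε.symm.surjective e
  induction x using Sym2.ind with
  | _ u w => exact ⟨⟨(u, w), hx⟩, rfl⟩

variable (G) in
def pivotEdge (k : G.NonRoot ⊕ G.OddComponent) : Fin M := dartIndex ε (G.pivotDart k)

theorem pivotEdge_injective : Function.Injective (G.pivotEdge ε) := fun _ _ h =>
  pivotDart_edge_injective (by simpa [pivotEdge, dartIndex] using h)

end Forest

section Incidence

omit [Fintype V]

variable {G : SimpleGraph V} {M : ℕ} (ε : Fin M ≃ G.edgeSet)

variable (G) in
def incidence : Matrix V (Fin M) ℤ := Matrix.of fun v e => if v ∈ (ε e : Sym2 V) then 1 else 0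

theorem incidence_mulVec_single_dartIndex (d : G.Dart) :
    G.incidence ε *ᵥ Pi.single (dartIndex ε d) 1 = Pi.single d.fst 1 + Pi.single d.snd 1 := by
  ext v
  have hne := d.fst_ne_snd
  simp only [mulVec_single_one, col_apply, incidence, dartIndex, of_apply,
    Equiv.apply_symm_apply, Dart.edge, Sym2.mem_iff, Pi.add_apply, Pi.single_apply]
  by_cases h₁ : v = d.fst <;> by_cases h₂ : v = d.snd <;> simp_all

theorem stackedIncidence_mulVec (x : Fin M → ℤ) :
    stackedIncidence G ε *ᵥ x = stackNeg ℤ V (G.incidence ε *ᵥ x) := by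
  ext (v | v) <;> simp [stackNeg, stackedIncidence, incidence, mulVec, dotProduct,
    ← Finset.sum_neg_distrib, apply_ite]

variable (G) in
def treeSpan : Submodule ℤ (Fin M → ℤ) :=
  span ℤ (range fun v : G.NonRoot => Pi.single (dartIndex ε (G.treeDart v)) 1)

theorem exists_mem_treeSpan_incidence_mulVec_eq (v : V) :
    ∃ y ∈ G.treeSpan ε,
      G.incidence ε *ᵥ y = Pi.single v 1 - G.depthSign v • Pi.single (G.root v) 1 := by
  induction hn : G.depth v using Nat.strong_induction_on generalizing v with
  | _ n ih =>
  by_cases hv : G.root v = v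
  · refine ⟨0, zero_mem _, ?_⟩
    rw [mulVec_zero, depthSign_eq_one_of_root_eq hv, hv, one_smul, sub_self]
  obtain ⟨y, hy, hAy⟩ := ih _ (by have := (depth_parent ⟨v, hv⟩).trans hn; omega)
    (G.parent ⟨v, hv⟩) rfl
  refine ⟨Pi.single (dartIndex ε (G.treeDart ⟨v, hv⟩)) 1 - y,
    sub_mem (subset_span ⟨⟨v, hv⟩, rfl⟩) hy, ?_⟩
  rw [mulVec_sub, incidence_mulVec_single_dartIndex, hAy, root_parent, depthSign_parent]
  simp only [treeDart]
  module

def pathToRoot (v : V) : Fin M → ℤ := (exists_mem_treeSpan_incidence_mulVec_eq ε v).choose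

theorem pathToRoot_mem (v : V) : pathToRoot ε v ∈ G.treeSpan ε :=
  (exists_mem_treeSpan_incidence_mulVec_eq ε v).choose_spec.1

theorem incidence_mulVec_pathToRoot (v : V) :
    G.incidence ε *ᵥ pathToRoot ε v = Pi.single v 1 - G.depthSign v • Pi.single (G.root v) 1 :=
  (exists_mem_treeSpan_incidence_mulVec_eq ε v).choose_spec.2

def oddColumn (C : G.OddComponent) : Fin M → ℤ :=
  G.depthSign (G.oddDart C).fst • (Pi.single (dartIndex ε (G.oddDart C)) 1 -
    pathToRoot ε (G.oddDart C).fst - pathToRoot ε (G.oddDart C).snd)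

theorem incidence_mulVec_oddColumn (C : G.OddComponent) :
    G.incidence ε *ᵥ oddColumn ε C = (2 : ℤ) • Pi.single (C : G.ConnectedComponent).out 1 := by
  set d := G.oddDart C
  have hu : G.root d.fst = (C : G.ConnectedComponent).out :=
    root_eq_out (connectedComponentMk_oddDart C)
  have hw : G.root d.snd = G.root d.fst := root_eq_of_reachable d.adj.reachable.symm
  have hs : G.depthSign d.snd = G.depthSign d.fst :=
    (depthSign_eq_of_even (even_depth_oddDart C)).symm
  rw [oddColumn, mulVec_smul, mulVec_sub, mulVec_sub, incidence_mulVec_single_dartIndex,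
    incidence_mulVec_pathToRoot, incidence_mulVec_pathToRoot, hw, hs, hu]
  linear_combination (norm := module)
    (2 : ℤ) • depthSign_mul_self d.fst • Pi.single (C : G.ConnectedComponent).out (1 : ℤ)

def pivotColumn : G.NonRoot ⊕ G.OddComponent → Fin M → ℤ :=
  Sum.elim (fun v => Pi.single (dartIndex ε (G.treeDart v)) 1) (oddColumn ε)

theorem treeSpan_le_span_pivotColumn : G.treeSpan ε ≤ span ℤ (range (pivotColumn ε)) :=
  span_mono (range_subset_iff.2 fun v => ⟨.inl v, rfl⟩)

theorem single_pivotEdge_mem (k : G.NonRoot ⊕ G.OddComponent) :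
    Pi.single (G.pivotEdge ε k) 1 ∈ span ℤ (range (pivotColumn ε)) := by
  rcases k with v | C
  · exact subset_span ⟨.inl v, rfl⟩
  · have hpath := fun v => treeSpan_le_span_pivotColumn ε (pathToRoot_mem ε v)
    have : Pi.single (G.pivotEdge ε (.inr C)) 1 =
        G.depthSign (G.oddDart C).fst • oddColumn ε C +
          pathToRoot ε (G.oddDart C).fst + pathToRoot ε (G.oddDart C).snd := by
      rw [oddColumn, smul_smul, depthSign_mul_self, one_smul]
      simp only [pivotEdge, pivotDart, Sum.elim_inr]
      abel
    rw [this]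
    exact add_mem (add_mem (smul_mem _ _ (subset_span ⟨.inr C, rfl⟩)) (hpath _)) (hpath _)

theorem exists_mem_span_pivotColumn (e : Fin M) : ∃ x ∈ span ℤ (range (pivotColumn ε)),
    G.incidence ε *ᵥ x = G.incidence ε *ᵥ Pi.single e 1 := by
  obtain ⟨d, rfl⟩ := exists_dartIndex_eq ε e
  have hpath := fun v => treeSpan_le_span_pivotColumn ε (pathToRoot_mem ε v)
  have hw : G.root d.snd = G.root d.fst := root_eq_of_reachable d.adj.reachable.symm
  rw [incidence_mulVec_single_dartIndex]
  rcases Nat.even_or_odd (G.depth d.fst + G.depth d.snd) with heven | hodd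
  · let C : G.OddComponent := ⟨_, hasOddClosedWalk_of_adj_of_even d.adj heven⟩
    refine ⟨pathToRoot ε d.fst + pathToRoot ε d.snd + G.depthSign d.fst • oddColumn ε C,
      add_mem (add_mem (hpath _) (hpath _)) (smul_mem _ _ (subset_span ⟨.inr C, rfl⟩)), ?_⟩
    rw [mulVec_add, mulVec_add, mulVec_smul, incidence_mulVec_pathToRoot,
      incidence_mulVec_pathToRoot, incidence_mulVec_oddColumn, hw,
      ← depthSign_eq_of_even heven, ← root_eq_out (C := C.1) rfl]
    module
  · refine ⟨pathToRoot ε d.fst + pathToRoot ε d.snd, add_mem (hpath _) (hpath _), ?_⟩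
    rw [mulVec_add, incidence_mulVec_pathToRoot, incidence_mulVec_pathToRoot, hw,
      depthSign_eq_neg_of_odd hodd]
    module

def reduction (e : Fin M) : Fin M → ℤ := (exists_mem_span_pivotColumn ε e).choose

theorem reduction_mem (e : Fin M) : reduction ε e ∈ span ℤ (range (pivotColumn ε)) :=
  (exists_mem_span_pivotColumn ε e).choose_spec.1

theorem incidence_mulVec_reduction (e : Fin M) :
    G.incidence ε *ᵥ reduction ε e = G.incidence ε *ᵥ Pi.single e 1 :=
  (exists_mem_span_pivotColumn ε e).choose_spec.2

def columnFamily :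
    (G.NonRoot ⊕ G.OddComponent) ⊕ {e // e ∉ range (G.pivotEdge ε)} → Fin M → ℤ :=
  Sum.elim (pivotColumn ε) fun e => Pi.single e.1 1 - reduction ε e.1

theorem span_range_columnFamily : span ℤ (range (columnFamily ε)) = ⊤ := by
  have hpivot : span ℤ (range (pivotColumn ε)) ≤ span ℤ (range (columnFamily ε)) :=
    span_mono (range_subset_iff.2 fun k => ⟨.inl k, rfl⟩)
  refine eq_top_of_forall_single_mem fun e => ?_
  by_cases he : e ∈ range (G.pivotEdge ε)
  · obtain ⟨k, rfl⟩ := he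
    exact hpivot (single_pivotEdge_mem ε k)
  · rw [← sub_add_cancel (Pi.single e 1) (reduction ε e)]
    exact add_mem (subset_span ⟨.inr ⟨e, he⟩, rfl⟩) (hpivot (reduction_mem ε e))

variable (G) in
def vertexFamily : (G.NonRoot ⊕ G.OddComponent) ⊕ G.EvenComponent → V → ℤ :=
  Sum.elim (Sum.elim (fun v => Pi.single (v : V) 1 + Pi.single (G.parent v) 1)
    fun C => Pi.single (C : G.ConnectedComponent).out 1)
    fun C => Pi.single (C : G.ConnectedComponent).out 1

theorem span_range_vertexFamily [Finite V] : span ℤ (range G.vertexFamily) = ⊤ := by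
  set S := span ℤ (range G.vertexFamily)
  have hroot : ∀ C : G.ConnectedComponent, Pi.single C.out 1 ∈ S := fun C => by
    by_cases hC : G.HasOddClosedWalk C
    · exact subset_span ⟨.inl (.inr ⟨C, hC⟩), rfl⟩
    · exact subset_span ⟨.inr ⟨C, hC⟩, rfl⟩
  refine eq_top_of_forall_single_mem fun v => ?_
  induction hn : G.depth v using Nat.strong_induction_on generalizing v with
  | _ n ih =>
  by_cases hv : G.root v = v
  · rw [← hv]; exact hroot _
  have hpar := ih _ (by have := (depth_parent ⟨v, hv⟩).trans hn; omega) (G.parent ⟨v, hv⟩) rfl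
  rw [← add_sub_cancel_right (Pi.single v 1) (Pi.single (G.parent ⟨v, hv⟩) 1)]
  exact sub_mem (subset_span ⟨.inl (.inl ⟨v, hv⟩), rfl⟩) hpar

theorem incidence_mulVec_columnFamily_nonRoot (v : G.NonRoot) :
    G.incidence ε *ᵥ columnFamily ε (.inl (.inl v)) = G.vertexFamily (.inl (.inl v)) :=
  incidence_mulVec_single_dartIndex ε (G.treeDart v)

theorem incidence_mulVec_columnFamily_oddComponent (C : G.OddComponent) :
    G.incidence ε *ᵥ columnFamily ε (.inl (.inr C)) =
      (2 : ℤ) • G.vertexFamily (.inl (.inr C)) :=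
  incidence_mulVec_oddColumn ε C

theorem incidence_mulVec_columnFamily_nonPivot (e : {e // e ∉ range (G.pivotEdge ε)}) :
    G.incidence ε *ᵥ columnFamily ε (.inr e) = 0 := by
  rw [columnFamily, Sum.elim_inr, mulVec_sub, incidence_mulVec_reduction, sub_self]

end Incidence

section Counting

variable {G : SimpleGraph V}

theorem numComp_le_card : numComp G ≤ Fintype.card V := by
  rw [numComp, Nat.card_eq_fintype_card]
  exact Fintype.card_le_of_surjective _ Quot.mk_surjective

theorem card_nonRoot : Fintype.card G.NonRoot = Fintype.card V - numComp G := by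
  have hroots : {v // G.root v = v} ≃ G.ConnectedComponent :=
    { toFun v := G.connectedComponentMk v
      invFun C := ⟨C.out, root_eq_out C.out_eq⟩
      left_inv v := Subtype.ext v.2
      right_inv C := C.out_eq }
  rw [numComp, Nat.card_eq_fintype_card, ← Fintype.card_congr hroots]
  exact Fintype.card_subtype_compl _

theorem card_oddComponent : Fintype.card G.OddComponent = numOddComp G :=
  Nat.card_eq_fintype_card.symm

theorem card_oddComponent_add_card_evenComponent :
    Fintype.card G.OddComponent + Fintype.card G.EvenComponent = numComp G := by
  rw [numComp, Nat.card_eq_fintype_card, ← Fintype.card_sum]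
  exact Fintype.card_congr (Equiv.sumCompl _)

theorem card_add_card_nonPivot {M : ℕ} (ε : Fin M ≃ G.edgeSet) :
    Fintype.card (G.NonRoot ⊕ G.OddComponent) +
      Fintype.card {e // e ∉ range (G.pivotEdge ε)} = M := by
  rw [← Fintype.card_sum, Fintype.card_congr ((Equiv.sumCongr
    (Equiv.ofInjective _ (pivotEdge_injective ε)) (.refl _)).trans (Equiv.sumCompl _)),
    Fintype.card_fin]

end Counting

end SimpleGraph

open SimpleGraph in
/-- Apart from zero rows, the Smith normal form of `(A_G; -A_G)` is diagonal with
`|V| - c(G)` entries equal to `1` followed by `c₁(G)` entries equal to `2`. -/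
theorem smithNormalForm_stackedIncidence (G : SimpleGraph V)
    {N M : ℕ} (hN : N = 2 * Fintype.card V) (ρ : (V ⊕ V) ≃ Fin N)
    (ε : Fin M ≃ G.edgeSet) :
    ∃ (U : Matrix (Fin N) (Fin N) ℤ) (W : Matrix (Fin M) (Fin M) ℤ),
      IsUnit U.det ∧ IsUnit W.det ∧
      ∀ i j, (U * (Matrix.reindex ρ (Equiv.refl (Fin M))
            (stackedIncidence G ε)) * W) i j =
        if (i : ℕ) = (j : ℕ) ∧ (j : ℕ) < Fintype.card V - numComp G then 1
        else if (i : ℕ) = (j : ℕ) ∧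
            (j : ℕ) < Fintype.card V - numComp G + numOddComp G then 2
        else 0 := by
  have hrows : span ℤ (range (stackNegFamily G.vertexFamily ∘ (Equiv.sumAssoc _ _ _).symm)) =
      ⊤ := by
    rw [(Equiv.sumAssoc _ _ _).symm.surjective.range_comp]
    exact span_range_stackNegFamily span_range_vertexFamily
  have hcard : Fintype.card G.NonRoot + Fintype.card G.OddComponent +
      Fintype.card (G.EvenComponent ⊕ V) = N := by
    have := G.card_oddComponent_add_card_evenComponent
    have := G.numComp_le_card
    rw [Fintype.card_sum, card_nonRoot, hN]
    omega
  obtain ⟨U, W, hU, hW, h⟩ := exists_isUnit_det_mul_reindex_mul_eq (stackedIncidence G ε) ρ 2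
    _ (columnFamily ε) hrows (span_range_columnFamily ε) hcard
    (by rw [← Fintype.card_sum]; exact card_add_card_nonPivot ε)
    (fun v => by rw [stackedIncidence_mulVec, incidence_mulVec_columnFamily_nonRoot]; rfl)
    (fun C => by
      rw [stackedIncidence_mulVec, incidence_mulVec_columnFamily_oddComponent, map_smul]; rfl)
    (fun e => by rw [stackedIncidence_mulVec, incidence_mulVec_columnFamily_nonPivot, map_zero])
  rw [card_nonRoot, card_oddComponent] at h
  exact ⟨U, W, hU, hW, h⟩
end
end

section
/- For every vertex i of a graph G, if a monomial m lies in I(G) + m_{{i}}, then m lies in m_{{i}} = ⟨x_i, y_i⟩. In particular, the parity binomial edge ideal I(G) contains no monomials. -/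
open MvPolynomial

noncomputable section

/-- If a monomial lies in `I(G) + ⟨x_i, y_i⟩`, then it lies in `⟨x_i, y_i⟩`;
in particular `I(G)` contains no monomials. -/
theorem monomial_mem_pbei_sup
    {k : Type*} [Field k] {V : Type*} (G : SimpleGraph V)
    (d : (V ⊕ V) →₀ ℕ) :
    (∀ i : V,
      monomial d (1 : k) ∈
          pbei k G ⊔ Ideal.span {X (Sum.inl i), X (Sum.inr i)} →
        monomial d (1 : k) ∈
          (Ideal.span {X (Sum.inl i), X (Sum.inr i)} :
            Ideal (MvPolynomial (V ⊕ V) k))) ∧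
    monomial d (1 : k) ∉ pbei k G := by
  classical
  constructor
  · intro i hm
    set I : Ideal (MvPolynomial (V ⊕ V) k) :=
      Ideal.span {X (Sum.inl i), X (Sum.inr i)} with hI
    by_cases h1 : d (Sum.inl i) ≠ 0
    · exact Ideal.mem_of_dvd _ (X_dvd_monomial.2 (Or.inr h1))
        (Ideal.subset_span (Set.mem_insert _ _))
    by_cases h2 : d (Sum.inr i) ≠ 0
    · exact Ideal.mem_of_dvd _ (X_dvd_monomial.2 (Or.inr h2))
        (Ideal.subset_span (Set.mem_insert_of_mem _ rfl))
    push_neg at h1 h2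
    -- use the substitution sending all variables other than x_i, y_i to 1
    exfalso
    set φ : MvPolynomial (V ⊕ V) k →ₐ[k] MvPolynomial (V ⊕ V) k :=
      aeval (fun v => if v = Sum.inl i ∨ v = Sum.inr i then X v else 1) with hφ
    have e1 : φ (X (Sum.inl i)) = X (Sum.inl i) := by simp [hφ]
    have e2 : φ (X (Sum.inr i)) = X (Sum.inr i) := by simp [hφ]
    have e3 : ∀ a : V, a ≠ i → φ (X (Sum.inl a)) = 1 := by
      intro a ha; simp [hφ, ha]
    have e4 : ∀ a : V, a ≠ i → φ (X (Sum.inr a)) = 1 := by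
      intro a ha; simp [hφ, ha]
    have hmemx : (X (Sum.inl i) : MvPolynomial (V ⊕ V) k) ∈ I :=
      Ideal.subset_span (Set.mem_insert _ _)
    have hmemy : (X (Sum.inr i) : MvPolynomial (V ⊕ V) k) ∈ I :=
      Ideal.subset_span (Set.mem_insert_of_mem _ rfl)
    have hmap : pbei k G ⊔ I ≤
        Ideal.comap (φ : MvPolynomial (V ⊕ V) k →+* MvPolynomial (V ⊕ V) k) I := by
      apply sup_le
      · rw [pbei, Ideal.span_le]
        rintro f ⟨a, b, hab, rfl⟩
        simp only [SetLike.mem_coe, Ideal.mem_comap]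
        simp only [RingHom.coe_coe, map_sub, map_mul]
        by_cases ha : a = i
        · subst ha
          have hb : b ≠ a := fun h => hab.ne h.symm
          rw [e1, e2, e3 b hb, e4 b hb, mul_one, mul_one]
          exact I.sub_mem hmemx hmemy
        by_cases hb : b = i
        · subst hb
          rw [e1, e2, e3 a ha, e4 a ha, one_mul, one_mul]
          exact I.sub_mem hmemx hmemy
        · rw [e3 a ha, e4 a ha, e3 b hb, e4 b hb]
          simp
      · rw [hI, Ideal.span_le]
        rintro f (rfl | rfl)
        · simp only [SetLike.mem_coe, Ideal.mem_comap]; simpa [RingHom.coe_coe, e1] using hmemx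
        · simp only [SetLike.mem_coe, Ideal.mem_comap]; simpa [RingHom.coe_coe, e2] using hmemy
    have hφm : φ (monomial d (1 : k)) ∈ I := hmap hm
    have hφm1 : φ (monomial d (1 : k)) = 1 := by
      rw [hφ, aeval_monomial, map_one, one_mul, Finsupp.prod]
      apply Finset.prod_eq_one
      intro v hv
      rw [Finsupp.mem_support_iff] at hv
      have hvi : ¬(v = Sum.inl i ∨ v = Sum.inr i) := by
        rintro (rfl | rfl)
        · exact hv h1
        · exact hv h2
      rw [if_neg hvi, one_pow]
    rw [hφm1] at hφm
    have hker : I ≤ RingHom.ker (constantCoeff : MvPolynomial (V ⊕ V) k →+* k) := by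
      rw [hI, Ideal.span_le]
      rintro f (rfl | rfl) <;> simp [RingHom.mem_ker]
    have := hker hφm
    rw [RingHom.mem_ker, map_one] at this
    exact one_ne_zero this
  · intro hm
    set ψ : MvPolynomial (V ⊕ V) k →ₐ[k] k := aeval (fun _ => (1 : k)) with hψ
    have hker : pbei k G ≤ RingHom.ker (ψ : MvPolynomial (V ⊕ V) k →+* k) := by
      rw [pbei, Ideal.span_le]
      rintro f ⟨a, b, hab, rfl⟩
      simp [RingHom.mem_ker, hψ]
    have := hker hm
    rw [RingHom.mem_ker] at this
    have h1 : ψ (monomial d (1 : k)) = 1 := by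
      rw [hψ, aeval_monomial, map_one, one_mul, Finsupp.prod]
      exact Finset.prod_eq_one fun v _ => one_pow _
    rw [RingHom.coe_coe, h1] at this
    exact one_ne_zero this
end
end

section
/- The parity binomial edge ideal I(K₃) of the triangle K₃ does not admit a square-free initial ideal with respect to any monomial order on k[x₁,x₂,x₃,y₁,y₂,y₃], over any field k. -/
/-!
Grade `k[x, y]` by vertex multidegree (`x_v` and `y_v` both of degree `e_v`) and the parity of
the `x`-degree. Every generator `x_i x_j - y_i y_j` of `I(G)` is a difference of two monomials of
the same grade, so the leading monomial of a nonzero element of `I(G)` is never the smallest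
monomial of its grade, while divisors of a grade-minimal monomial are grade-minimal.

A monomial of vertex multidegree `(1,1,1)` picks one of `x_v`, `y_v` for each `v`. The smallest
such monomials of even and of odd `x`-degree cannot both pick the smaller variable everywhere, so
one of them, `w`, contains the larger variable `z` of some pair `{z, z'}`. The triangle relations
give `(w / z) (z² - z'²) ∈ I(K₃)`, with leading monomial `w z`. A square-free generator of the
initial ideal dividing `w z` divides `w`, so it is grade-minimal, yet it is the leading monomial
of an element of `I(K₃)`.
-/
open MvPolynomial

noncomputable section

/-- The multidegree (leading exponent) of a polynomial with respect to a
monomial order: the maximum of its support. -/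
def mDeg {σ : Type*} (m : MonomialOrder σ) {k : Type*} [Field k]
    (f : MvPolynomial σ k) : σ →₀ ℕ :=
  m.toSyn.symm (f.support.sup fun d => m.toSyn d)

/-- The initial ideal of `I` with respect to a monomial order `m`. -/
def initialIdeal {σ : Type*} (m : MonomialOrder σ) {k : Type*} [Field k]
    (I : Ideal (MvPolynomial σ k)) : Ideal (MvPolynomial σ k) :=
  Ideal.span {g | ∃ f ∈ I, f ≠ 0 ∧ g = monomial (mDeg m f) (1 : k)}

section

open MonomialOrder

variable {σ k : Type*} [Field k]

theorem mDeg_eq_degree (m : MonomialOrder σ) (f : MvPolynomial σ k) : mDeg m f = m.degree f :=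
  rfl

namespace MonomialOrder

variable (m : MonomialOrder σ) {M : Type*} [AddCommMonoid M] (π : (σ →₀ ℕ) →+ M)

def IsMinInFiber (d : σ →₀ ℕ) : Prop :=
  ∀ e, π e = π d → d ≼[m] e

variable {m π}

theorem IsMinInFiber.of_le {d w : σ →₀ ℕ} (hw : m.IsMinInFiber π w) (hdw : d ≤ w) :
    m.IsMinInFiber π d := by
  intro e he
  have hfib : π (e + (w - d)) = π w := by
    rw [map_add, he, ← map_add, add_tsub_cancel_of_le hdw]
  have := hw _ hfib
  rw [← add_tsub_cancel_of_le hdw, add_tsub_cancel_left, map_add, map_add] at this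
  exact le_of_add_le_add_right this

variable (m π) in
theorem exists_isMinInFiber (e : σ →₀ ℕ) : ∃ w, π w = π e ∧ m.IsMinInFiber π w := by
  obtain ⟨w, hw, hmin⟩ := WellFounded.has_min (InvImage.wf m.toSyn wellFounded_lt)
    {w | π w = π e} ⟨e, rfl⟩
  exact ⟨w, hw, fun e' he' => not_lt.mp (hmin e' (he'.trans hw))⟩

theorem not_isMinInFiber_degree {f : MvPolynomial σ k}
    (hf : AddMonoidAlgebra.mapDomain π f = 0) (hf0 : f ≠ 0) :
    ¬ m.IsMinInFiber π (m.degree f) := by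
  intro hmin
  have hd := (m.degree_mem_support_iff f).mpr hf0
  have hfiber : ∀ e ∈ f.support, π e = π (m.degree f) → e = m.degree f := fun e he hπ =>
    m.toSyn.injective (le_antisymm (m.le_degree he) (hmin e hπ))
  have := congrArg (fun x => x.coeff (π (m.degree f))) hf
  simp only [AddMonoidAlgebra.coeff_mapDomain, Finsupp.mapDomain, Finsupp.sum_apply] at this
  rw [Finsupp.sum, Finset.sum_eq_single (m.degree f)] at this
  · simp only [Finsupp.single_eq_same, AddMonoidAlgebra.coeff_zero, Finsupp.coe_zero,
      Pi.zero_apply] at this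
    exact mem_support_iff.mp hd this
  · intro e he hne
    exact Finsupp.single_eq_of_ne (fun h => hne (hfiber e he h.symm))
  · exact fun h => absurd hd h

section Binomial

variable {a b : σ →₀ ℕ}

theorem degree_monomial_sub_monomial (h : b ≺[m] a) :
    m.degree (monomial a (1 : k) - monomial b 1) = a := by
  classical
  rw [m.degree_sub_of_lt] <;> simp [degree_monomial, h]

theorem degree_monomial_mul_X_sq_sub_X_sq {s t : σ} (u : σ →₀ ℕ)
    (h : Finsupp.single t 1 ≺[m] Finsupp.single s 1) :
    m.degree (monomial u (1 : k) * (X s ^ 2 - X t ^ 2)) = u + Finsupp.single s 2 := by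
  have hlt : u + Finsupp.single t 2 ≺[m] u + Finsupp.single s 2 := by
    rw [← one_add_one_eq_two, Finsupp.single_add, Finsupp.single_add, map_add, map_add,
      map_add, map_add]
    exact (add_lt_add_iff_left _).mpr (add_lt_add h h)
  rw [X_pow_eq_monomial, X_pow_eq_monomial, mul_sub, monomial_mul, monomial_mul, one_mul]
  exact degree_monomial_sub_monomial hlt

end Binomial

end MonomialOrder

theorem Finsupp.le_of_le_add_single_of_le_one {ι : Type*} {d w : ι →₀ ℕ} {s : ι}
    (hd : ∀ t, d t ≤ 1) (hs : w s ≠ 0) (h : d ≤ w + Finsupp.single s 1) : d ≤ w := by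
  classical
  intro t
  have := h t
  simp only [Finsupp.coe_add, Pi.add_apply, Finsupp.single_apply] at this
  split_ifs at this with hst
  · subst hst; exact (hd _).trans (Nat.one_le_iff_ne_zero.mpr hs)
  · simpa using this

section InitialIdeal

variable {m : MonomialOrder σ} {I : Ideal (MvPolynomial σ k)}

theorem exists_degree_le_of_monomial_mem_initialIdeal {d : σ →₀ ℕ}
    (hd : monomial d (1 : k) ∈ initialIdeal m I) : ∃ f ∈ I, f ≠ 0 ∧ m.degree f ≤ d := by
  have hspan : initialIdeal m I = Ideal.span ((fun e => monomial e (1 : k)) ''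
      {e | ∃ f ∈ I, f ≠ 0 ∧ m.degree f = e}) := by
    rw [initialIdeal]
    congr 1
    ext g
    simp only [Set.mem_image, mDeg_eq_degree]
    constructor
    · rintro ⟨f, hf, hf0, rfl⟩
      exact ⟨_, ⟨f, hf, hf0, rfl⟩, rfl⟩
    · rintro ⟨_, ⟨f, hf, hf0, rfl⟩, rfl⟩
      exact ⟨f, hf, hf0, rfl⟩
  rw [hspan, mem_ideal_span_monomial_image] at hd
  obtain ⟨_, ⟨f, hf, hf0, rfl⟩, hle⟩ := hd d (by classical simp [coeff_monomial])
  exact ⟨f, hf, hf0, hle⟩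

theorem exists_squarefree_degree_le_of_initialIdeal_eq_span
    {S : Set (MvPolynomial σ k)}
    (hS : ∀ g ∈ S, ∃ d : σ →₀ ℕ, (∀ s, d s ≤ 1) ∧ g = monomial d (1 : k))
    (hI : initialIdeal m I = Ideal.span S) {F : MvPolynomial σ k} (hF : F ∈ I) (hF0 : F ≠ 0) :
    ∃ f ∈ I, f ≠ 0 ∧ (∀ s, m.degree f s ≤ 1) ∧ m.degree f ≤ m.degree F := by
  have hS_le : Ideal.span S ≤ Ideal.span ((fun d => monomial d (1 : k)) ''
      {d | (∀ s, d s ≤ 1) ∧ monomial d (1 : k) ∈ Ideal.span S}) := by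
    refine Ideal.span_mono fun g hg => ?_
    obtain ⟨d, hd, rfl⟩ := hS g hg
    exact ⟨d, ⟨hd, Ideal.subset_span hg⟩, rfl⟩
  have hF_in : monomial (m.degree F) (1 : k) ∈ Ideal.span S :=
    hI ▸ Ideal.subset_span ⟨F, hF, hF0, rfl⟩
  obtain ⟨d, ⟨hd_sq, hd_mem⟩, hdF⟩ :=
    mem_ideal_span_monomial_image.mp (hS_le hF_in) (m.degree F)
      (by classical simp [coeff_monomial])
  obtain ⟨f, hf, hf0, hfd⟩ := exists_degree_le_of_monomial_mem_initialIdeal (hI ▸ hd_mem)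
  exact ⟨f, hf, hf0, fun s => (hfd s).trans (hd_sq s), hfd.trans hdF⟩

end InitialIdeal

section ParityBinomialEdgeIdeal

variable {V : Type*}

variable (V) in
def pbeiGrading : (V ⊕ V →₀ ℕ) →+ (V → ℕ) × ZMod 2 where
  toFun e := (fun v => e (.inl v) + e (.inr v), Finsupp.weight (Sum.elim 1 0) e)
  map_zero' := by ext <;> simp
  map_add' e e' := by
    ext v
    · simp only [Finsupp.coe_add, Pi.add_apply, Prod.fst_add]
      ring
    · simp

theorem pbeiGrading_single_inl (v : V) :
    pbeiGrading V (Finsupp.single (.inl v) 1) =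
      pbeiGrading V (Finsupp.single (.inr v) 1) + (0, 1) := by
  classical
  ext w
  · simp [pbeiGrading, Finsupp.single_apply]
  · simp [pbeiGrading, Finsupp.weight_single]

theorem mapDomain_pbeiGrading_eq_zero {G : SimpleGraph V} {f : MvPolynomial (V ⊕ V) k}
    (hf : f ∈ pbei k G) : AddMonoidAlgebra.mapDomain (pbeiGrading V) f = 0 := by
  suffices pbei k G ≤ RingHom.ker (AddMonoidAlgebra.mapDomainRingHom k (pbeiGrading V)) from
    this hf
  refine Ideal.span_le.mpr ?_
  rintro _ ⟨i, j, -, rfl⟩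
  simp only [X, monomial_mul, mul_one]
  simp only [SetLike.mem_coe, RingHom.mem_ker, map_sub, ← single_eq_monomial,
    AddMonoidAlgebra.mapDomainRingHom_apply, AddMonoidAlgebra.mapDomain_single, map_add,
    pbeiGrading_single_inl]
  have h2 : ((0, 1) + (0, 1) : (V → ℕ) × ZMod 2) = 0 := Prod.ext (add_zero 0) rfl
  rw [sub_eq_zero, add_add_add_comm, h2, add_zero]

end ParityBinomialEdgeIdeal

theorem mul_mul_sq_sub_sq_eq_zero {R : Type*} [CommRing R] {xa ya xb yb xc yc s t : R}
    (hab : xa * xb = ya * yb) (hac : xa * xc = ya * yc) (hbc : xb * xc = yb * yc)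
    (hs : s = xa ∨ s = ya) (ht : t = xb ∨ t = yb) : s * t * (xc ^ 2 - yc ^ 2) = 0 := by
  rcases hs with hs | hs <;> rcases ht with ht | ht <;> rw [hs, ht]
  · linear_combination (xb * xc) * hac + (ya * yc) * hbc - yc ^ 2 * hab
  · linear_combination (xc * yb) * hac + (xa * yc) * hbc - xc * yc * hab
  · linear_combination (xc * ya) * hbc + (xb * yc) * hac - xc * yc * hab
  · linear_combination (xb * xc) * hac + (ya * yc) * hbc - xc ^ 2 * hab

section Triangle

variable {V : Type*} {G : SimpleGraph V} {a b c : V}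

theorem X_mul_X_mul_sq_sub_sq_mem_pbei (hab : G.Adj a b) (hac : G.Adj a c) (hbc : G.Adj b c)
    {s t : V ⊕ V} (hs : s = .inl a ∨ s = .inr a) (ht : t = .inl b ∨ t = .inr b) :
    X s * X t * (X (.inl c) ^ 2 - X (.inr c) ^ 2) ∈ pbei k G := by
  let q := Ideal.Quotient.mk (pbei k G)
  have rel {i j : V} (hij : G.Adj i j) :
      q (X (.inl i)) * q (X (.inl j)) = q (X (.inr i)) * q (X (.inr j)) := by
    rw [← map_mul, ← map_mul]
    exact Ideal.Quotient.eq.mpr (Ideal.subset_span ⟨_, _, hij, rfl⟩)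
  rw [← Ideal.Quotient.eq_zero_iff_mem, map_mul, map_mul, map_sub, map_pow, map_pow]
  exact mul_mul_sq_sub_sq_eq_zero (rel hab) (rel hac) (rel hbc)
    (hs.imp (congrArg (q ∘ X)) (congrArg (q ∘ X)))
    (ht.imp (congrArg (q ∘ X)) (congrArg (q ∘ X)))

theorem monomial_mul_sq_sub_sq_mem_pbei (hab : G.Adj a b) (hac : G.Adj a c)
    (hbc : G.Adj b c) {u : V ⊕ V →₀ ℕ} (ha : u (.inl a) + u (.inr a) ≠ 0)
    (hb : u (.inl b) + u (.inr b) ≠ 0) :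
    monomial u 1 * (X (.inl c) ^ 2 - X (.inr c) ^ 2) ∈ pbei k G := by
  have exists_var (v : V) (hv : u (.inl v) + u (.inr v) ≠ 0) :
      ∃ s, (s = .inl v ∨ s = .inr v) ∧ u s ≠ 0 := by
    by_cases h : u (.inl v) = 0
    · exact ⟨.inr v, .inr rfl, by omega⟩
    · exact ⟨.inl v, .inl rfl, h⟩
  obtain ⟨s, hs, hus⟩ := exists_var a ha
  obtain ⟨t, ht, hut⟩ := exists_var b hb
  have hst : s ≠ t := by
    rcases hs with rfl | rfl <;> rcases ht with rfl | rfl <;> simp [hab.ne]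
  have hle : Finsupp.single s 1 + Finsupp.single t 1 ≤ u := by
    classical
    intro x
    simp only [Finsupp.coe_add, Pi.add_apply, Finsupp.single_apply]
    split_ifs with h₁ h₂ <;> subst_vars <;> first | exact absurd rfl hst | omega
  have hdvd : X s * X t ∣ (monomial u 1 : MvPolynomial (V ⊕ V) k) := by
    rw [X, X, monomial_mul, one_mul]
    exact monomial_dvd_monomial.mpr ⟨.inr hle, one_dvd _⟩
  exact (pbei k G).mem_of_dvd (mul_dvd_mul_right hdvd _)
    (X_mul_X_mul_sq_sub_sq_mem_pbei hab hac hbc hs ht)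

end Triangle

theorem apply_eq_ite_of_forall_le_swap {V : Type*} {m : MonomialOrder (V ⊕ V)}
    {w : V ⊕ V →₀ ℕ} (hw : ∀ s, w s + w s.swap = 1)
    (hle : ∀ s, w s = 1 → Finsupp.single s 1 ≼[m] Finsupp.single s.swap 1) (s : V ⊕ V) :
    w s = if Finsupp.single s 1 ≺[m] Finsupp.single s.swap 1 then 1 else 0 := by
  have hne : m.toSyn (Finsupp.single s 1) ≠ m.toSyn (Finsupp.single s.swap 1) := by
    rw [Ne, m.toSyn.injective.eq_iff, Finsupp.single_left_inj one_ne_zero]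
    cases s <;> simp
  have := hw s
  rcases Nat.le_one_iff_eq_zero_or_eq_one.mp (Nat.le.intro this) with h0 | h1
  · have := hle s.swap (by omega)
    rw [Sum.swap_swap] at this
    rw [if_neg this.not_gt, h0]
  · rw [if_pos ((hle s h1).lt_of_ne hne), h1]

theorem exists_isMinInFiber_swap_lt (m : MonomialOrder (Fin 3 ⊕ Fin 3)) :
    ∃ w s, m.IsMinInFiber (pbeiGrading (Fin 3)) w ∧ (∀ s, w s + w s.swap = 1) ∧ w s = 1 ∧
      Finsupp.single s.swap 1 ≺[m] Finsupp.single s 1 := by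
  let e₀ : Fin 3 ⊕ Fin 3 →₀ ℕ :=
    Finsupp.single (.inr 0) 1 + Finsupp.single (.inr 1) 1 + Finsupp.single (.inr 2) 1
  let e₁ : Fin 3 ⊕ Fin 3 →₀ ℕ :=
    Finsupp.single (.inl 0) 1 + Finsupp.single (.inr 1) 1 + Finsupp.single (.inr 2) 1
  have he₀ : pbeiGrading (Fin 3) e₀ = (fun _ => 1, 0) := by
    ext v
    · fin_cases v <;> simp [e₀, pbeiGrading, Finsupp.single_apply]
    · simp [e₀, pbeiGrading, Finsupp.weight_single]
  have he₁ : pbeiGrading (Fin 3) e₁ = (fun _ => 1, 1) := by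
    ext v
    · fin_cases v <;> simp [e₁, pbeiGrading, Finsupp.single_apply]
    · simp [e₁, pbeiGrading, Finsupp.weight_single]
  have shape {w : Fin 3 ⊕ Fin 3 →₀ ℕ} (h : (pbeiGrading (Fin 3) w).1 = fun _ => 1) (s) :
      w s + w s.swap = 1 := by
    rcases s with v | v
    · exact congrFun h v
    · exact (add_comm _ _).trans (congrFun h v)
  obtain ⟨w₀, h₀, hmin₀⟩ := m.exists_isMinInFiber (pbeiGrading (Fin 3)) e₀
  obtain ⟨w₁, h₁, hmin₁⟩ := m.exists_isMinInFiber (pbeiGrading (Fin 3)) e₁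
  rw [he₀] at h₀
  rw [he₁] at h₁
  -- Otherwise both minima pick the smaller variable of every pair, so they coincide.
  by_contra! H
  have hw₀ := shape (congrArg Prod.fst h₀)
  have hw₁ := shape (congrArg Prod.fst h₁)
  have heq : w₀ = w₁ := Finsupp.ext fun s =>
    (apply_eq_ite_of_forall_le_swap hw₀ (fun s => H w₀ s hmin₀ hw₀) s).trans
      (apply_eq_ite_of_forall_le_swap hw₁ (fun s => H w₁ s hmin₁ hw₁) s).symm
  have hparity := congrArg Prod.snd (h₀.symm.trans (heq ▸ h₁))
  exact absurd hparity (by decide)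

theorem exists_mem_pbei_top_degree_eq (m : MonomialOrder (Fin 3 ⊕ Fin 3))
    {w : Fin 3 ⊕ Fin 3 →₀ ℕ} (hw : ∀ s, w s + w s.swap = 1) {s : Fin 3 ⊕ Fin 3}
    (hs : w s = 1) (hlt : Finsupp.single s.swap 1 ≺[m] Finsupp.single s 1) :
    ∃ F ∈ pbei k (⊤ : SimpleGraph (Fin 3)), F ≠ 0 ∧
      m.degree F = w + Finsupp.single s 1 := by
  obtain ⟨c, hc⟩ : ∃ c, s = .inl c ∨ s = .inr c := by rcases s with c | c <;> simp
  set u := w - Finsupp.single s 1 with hu_def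
  have hwu : w = u + Finsupp.single s 1 :=
    (tsub_add_cancel_of_le (Finsupp.single_le_iff.mpr hs.ge)).symm
  have hu : ∀ v ≠ c, u (.inl v) + u (.inr v) ≠ 0 := by
    intro v hv
    have hsv : s ≠ .inl v ∧ s ≠ .inr v := by rcases hc with rfl | rfl <;> simp [Ne.symm hv]
    have := hw (.inl v)
    simp only [hu_def, Finsupp.coe_tsub, Pi.sub_apply, Finsupp.single_eq_of_ne hsv.1.symm,
      Finsupp.single_eq_of_ne hsv.2.symm, Sum.swap_inl] at this ⊢
    omega
  have hc' : c + 1 ≠ c + 2 ∧ c + 1 ≠ c ∧ c + 2 ≠ c :=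
    (by decide : ∀ c : Fin 3, c + 1 ≠ c + 2 ∧ c + 1 ≠ c ∧ c + 2 ≠ c) c
  have hmem : monomial u 1 * (X s ^ 2 - X s.swap ^ 2) ∈ pbei k (⊤ : SimpleGraph (Fin 3)) := by
    have key := monomial_mul_sq_sub_sq_mem_pbei (k := k) (G := ⊤) (c := c)
      ((SimpleGraph.top_adj _ _).mpr hc'.1) ((SimpleGraph.top_adj _ _).mpr hc'.2.1)
      ((SimpleGraph.top_adj _ _).mpr hc'.2.2)
      (hu _ hc'.2.1) (hu _ hc'.2.2)
    rcases hc with rfl | rfl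
    · exact key
    · rw [Sum.swap_inr, ← neg_sub, mul_neg]
      exact neg_mem key
  have hdeg : m.degree (monomial u (1 : k) * (X s ^ 2 - X s.swap ^ 2)) =
      w + Finsupp.single s 1 := by
    rw [degree_monomial_mul_X_sq_sub_X_sq (k := k) u hlt, hwu, add_assoc, ← Finsupp.single_add]
  refine ⟨_, hmem, m.ne_zero_of_degree_ne_zero fun h => ?_, hdeg⟩
  simpa [hdeg] using DFunLike.congr_fun h s

end

/-- The parity binomial edge ideal of the triangle `K₃` has no square-free
initial ideal with respect to any monomial order, over any field. -/
theorem pbei_K3_no_squarefree_initialIdeal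
    {k : Type*} [Field k] (m : MonomialOrder (Fin 3 ⊕ Fin 3)) :
    ¬ ∃ S : Set (MvPolynomial (Fin 3 ⊕ Fin 3) k),
        (∀ g ∈ S, ∃ d : (Fin 3 ⊕ Fin 3) →₀ ℕ,
          (∀ s, d s ≤ 1) ∧ g = monomial d (1 : k)) ∧
        initialIdeal m (pbei k (⊤ : SimpleGraph (Fin 3))) = Ideal.span S := by
  rintro ⟨S, hS, hI⟩
  obtain ⟨w, s, hmin, hw, hs, hlt⟩ := exists_isMinInFiber_swap_lt m
  obtain ⟨F, hF, hF0, hdeg⟩ := exists_mem_pbei_top_degree_eq (k := k) m hw hs hlt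
  obtain ⟨f, hf, hf0, hsq, hle⟩ :=
    exists_squarefree_degree_le_of_initialIdeal_eq_span hS hI hF hF0
  have hfw : m.degree f ≤ w :=
    Finsupp.le_of_le_add_single_of_le_one hsq (by omega) (hdeg ▸ hle)
  exact MonomialOrder.not_isMinInFiber_degree (mapDomain_pbeiGrading_eq_zero hf) hf0
    (hmin.of_le hfw)
end
end
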